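/- If the exponential family log-density gradient is ∇log p_θ(x) = ∇r(x)θ + ∇b(x), then the per-datum diffusion score matching loss d_m(θ,x) = ||m(x)^T ∇log p_θ(x)||_2^2 + 2∇·(m(x)m(x)^T ∇log p_θ(x)) equals, up to additive terms independent of θ, the quadratic form θ^T Λ(x) θ + 2 θ^T ν(x), where Λ(x) = ∇r(x)^T m(x)m(x)^T ∇r(x) and ν(x) = ∇r(x)^T m(x)m(x)^T ∇b(x) + ∇·(m(x)m(x)^T ∇r(x)). -/

import Mathlib

open Matrix Finset

/-- Partial derivative of `f : ℝ^d → ℝ` in coordinate `i` at `x`. -/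
noncomputable def pderiv1 {d : ℕ} (f : (Fin d → ℝ) → ℝ) (i : Fin d)
    (x : Fin d → ℝ) : ℝ :=
  deriv (fun t => f (Function.update x i t)) (x i)

/-- For an exponential family with `∇log p_θ(y) = ∇r(y)θ + ∇b(y)`, the per-datum
diffusion score matching loss
`d_m(θ,x) = ‖m(x)ᵀ∇log p_θ(x)‖² + 2∇·(m mᵀ ∇log p_θ)(x)` equals
`θᵀΛ(x)θ + 2θᵀν(x)` up to an additive constant independent of `θ`, with
`Λ(x) = ∇r(x)ᵀ m mᵀ ∇r(x)` and `ν(x) = ∇r(x)ᵀ m mᵀ ∇b(x) + ∇·(m mᵀ ∇r)(x)`. -/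
theorem dsm_loss_exponential_family {d p : ℕ}
    (r : (Fin d → ℝ) → Fin p → ℝ) (b : (Fin d → ℝ) → ℝ)
    (m : (Fin d → ℝ) → Matrix (Fin d) (Fin d) ℝ)
    -- the Jacobian of `r` and the gradient of `b`
    (gradr : (Fin d → ℝ) → Matrix (Fin d) (Fin p) ℝ)
    (gradb : (Fin d → ℝ) → Fin d → ℝ)
    (hgradr : ∀ y i j, gradr y i j = pderiv1 (fun z => r z j) i y)
    (hgradb : ∀ y i, gradb y i = pderiv1 b i y)
    (x : Fin d → ℝ)
    -- differentiability of the components of `m mᵀ ∇r` and `m mᵀ ∇b` at `x`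
    (hdiffr : ∀ (i : Fin d) (j : Fin p), DifferentiableAt ℝ
      (fun t => (m (Function.update x i t) * (m (Function.update x i t))ᵀ *
        gradr (Function.update x i t)) i j) (x i))
    (hdiffb : ∀ i : Fin d, DifferentiableAt ℝ
      (fun t => (m (Function.update x i t) * (m (Function.update x i t))ᵀ).mulVec
        (gradb (Function.update x i t)) i) (x i)) :
    ∃ C : ℝ, ∀ θ : Fin p → ℝ,
      (∑ i, ((m x)ᵀ.mulVec ((gradr x).mulVec θ + gradb x) i) ^ 2) +
        2 * (∑ i, pderiv1
          (fun y => (m y * (m y)ᵀ).mulVec ((gradr y).mulVec θ + gradb y) i) i x) =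
      θ ⬝ᵥ ((gradr x)ᵀ * (m x * (m x)ᵀ) * gradr x).mulVec θ +
        2 * (θ ⬝ᵥ (fun j => (gradr x)ᵀ.mulVec ((m x * (m x)ᵀ).mulVec (gradb x)) j +
          ∑ i, pderiv1 (fun y => (m y * (m y)ᵀ * gradr y) i j) i x)) + C := by
  clear hgradr hgradb
  refine ⟨(∑ i, ((m x)ᵀ.mulVec (gradb x) i) ^ 2) +
      2 * (∑ i, pderiv1 (fun y => (m y * (m y)ᵀ).mulVec (gradb y) i) i x), fun θ => ?_⟩
  -- linearity of the partial derivatives in θ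
  have key : ∀ i : Fin d,
      pderiv1 (fun y => (m y * (m y)ᵀ).mulVec ((gradr y).mulVec θ + gradb y) i) i x =
      (∑ j, θ j * pderiv1 (fun y => (m y * (m y)ᵀ * gradr y) i j) i x) +
        pderiv1 (fun y => (m y * (m y)ᵀ).mulVec (gradb y) i) i x := by
    intro i
    unfold pderiv1
    have hfun : (fun t => (m (Function.update x i t) * (m (Function.update x i t))ᵀ).mulVec
        ((gradr (Function.update x i t)).mulVec θ + gradb (Function.update x i t)) i) =
        (fun t => (∑ j, θ j * (m (Function.update x i t) * (m (Function.update x i t))ᵀ *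
            gradr (Function.update x i t)) i j) +
          (m (Function.update x i t) * (m (Function.update x i t))ᵀ).mulVec
            (gradb (Function.update x i t)) i) := by
      funext t
      simp only [Matrix.mulVec, dotProduct, Pi.add_apply, Matrix.mul_apply,
        mul_add, Finset.sum_add_distrib, Finset.mul_sum, Finset.sum_mul]
      congr 1
      rw [Finset.sum_comm]
      exact Finset.sum_congr rfl fun j _ => Finset.sum_congr rfl fun k _ =>
        Finset.sum_congr rfl fun l _ => by ring
    rw [hfun, deriv_fun_add (DifferentiableAt.fun_sum fun j _ => ((hdiffr i j).const_mul (θ j)))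
      (hdiffb i), deriv_fun_sum fun j _ => ((hdiffr i j).const_mul (θ j))]
    congr 1
    exact Finset.sum_congr rfl fun j _ => deriv_const_mul (θ j) (hdiffr i j)
  simp only [key]
  -- split the squared term
  have hsplit : ∀ i : Fin d, (m x)ᵀ.mulVec ((gradr x).mulVec θ + gradb x) i =
      ((m x)ᵀ * gradr x).mulVec θ i + (m x)ᵀ.mulVec (gradb x) i := by
    intro i
    rw [Matrix.mulVec_add, ← Matrix.mulVec_mulVec]
    rfl
  simp only [hsplit]
  set v := ((m x)ᵀ * gradr x).mulVec θ with hv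
  set w := (m x)ᵀ.mulVec (gradb x) with hw
  have hA : ∑ i, v i ^ 2 = θ ⬝ᵥ ((gradr x)ᵀ * (m x * (m x)ᵀ) * gradr x).mulVec θ := by
    have : ((gradr x)ᵀ * (m x * (m x)ᵀ) * gradr x) = ((m x)ᵀ * gradr x)ᵀ * ((m x)ᵀ * gradr x) := by
      simp [Matrix.transpose_mul, Matrix.mul_assoc]
    rw [this, ← Matrix.mulVec_mulVec, Matrix.dotProduct_mulVec, Matrix.vecMul_transpose, hv]
    simp [dotProduct, sq]
  have hB : ∑ i, v i * w i = θ ⬝ᵥ (fun j => (gradr x)ᵀ.mulVec ((m x * (m x)ᵀ).mulVec (gradb x)) j) := by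
    have hw2 : (fun j => (gradr x)ᵀ.mulVec ((m x * (m x)ᵀ).mulVec (gradb x)) j) =
        (((m x)ᵀ * gradr x)ᵀ).mulVec w := by
      funext j
      rw [hw, Matrix.transpose_mul, Matrix.transpose_transpose, ← Matrix.mulVec_mulVec,
        ← Matrix.mulVec_mulVec, Matrix.mulVec_mulVec]
    rw [hw2, Matrix.dotProduct_mulVec, Matrix.vecMul_transpose]
    simp [dotProduct, hv]
  have hD : ∑ i, ∑ j, θ j * pderiv1 (fun y => (m y * (m y)ᵀ * gradr y) i j) i x =
      ∑ j, θ j * ∑ i, pderiv1 (fun y => (m y * (m y)ᵀ * gradr y) i j) i x := by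
    rw [Finset.sum_comm]
    exact Finset.sum_congr rfl fun j _ => (Finset.mul_sum _ _ _).symm
  simp only [dotProduct, mul_add, Finset.sum_add_distrib] at *
  have expand : ∀ i : Fin d, (v i + w i) ^ 2 = v i ^ 2 + 2 * (v i * w i) + w i ^ 2 := by
    intro i; ring
  simp only [expand, Finset.sum_add_distrib]
  rw [← hA, ← hD]
  have : ∑ j, θ j * ((gradr x)ᵀ.mulVec ((m x * (m x)ᵀ).mulVec (gradb x)) j) = ∑ i, v i * w i := by
    rw [hB]
  rw [this]
  have h2 : ∑ i, 2 * (v i * w i) = (∑ i, v i * w i) * 2 := by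
    rw [Finset.sum_mul]
    exact Finset.sum_congr rfl fun i _ => by ring
  rw [h2]
  ring
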